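/- Let P : ℝ^N → ℝ^N denote the orthogonal projection onto the hyperplane {x ∈ ℝ^N : Σ x_i = 0}, and let S_ω := { f(θ) : θ ∈ ℝ^N, κ_i(θ) > 0 for all i, Σ_i 1/κ_i(θ) ≤ 2 }. Then the image under P of the cube [−N/2, N/2]^N is contained in the closure of S_ω; that is, every frequency vector in this polytope (the scaled Voronoi cell of the root lattice A_{N−1}) admits an at-least-marginally-stable fully synchronized configuration. -/

import Mathlib

open Real Finset

/-- The Kuramoto interaction vector field `f_i(θ) = Σ_j sin (θ_j - θ_i)`. -/
noncomputable def kuraF (N : ℕ) (θ : Fin N → ℝ) : Fin N → ℝ :=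
  fun i => ∑ j, Real.sin (θ j - θ i)

/-- `κ_i(θ) = Σ_j cos (θ_j - θ_i)`. -/
noncomputable def kappa (N : ℕ) (θ : Fin N → ℝ) (i : Fin N) : ℝ :=
  ∑ j, Real.cos (θ j - θ i)

/-- The set `S_ω` of frequency vectors admitting a stable fully synchronized
configuration. -/
def stableFreqSet (N : ℕ) : Set (Fin N → ℝ) :=
  {ω | ∃ θ : Fin N → ℝ, (∀ i, 0 < kappa N θ i) ∧ (∑ i, 1 / kappa N θ i ≤ 2) ∧
    ω = kuraF N θ}

/-- Orthogonal projection of `ℝ^N` onto the hyperplane `{x | Σ_i x_i = 0}`. -/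
noncomputable def meanZeroProj (N : ℕ) (x : Fin N → ℝ) : Fin N → ℝ :=
  fun i => x i - (∑ j, x j) / N

/-!
For `w` with `Σ w_i = 0` and `|w_i| < 1`, the configuration `θ_i = -arcsin w_i` has
`Σ_j sin θ_j = 0`, so with `C = Σ_j cos θ_j` it has `f(θ) = C w` and `κ_i = C cos θ_i`; it is
stable iff `Σ_i 1 / cos θ_i ≤ 2 C`.

Along a ray `w = l ω` the stability gap `Σ 1 / cos θ_i - 2 C` increases from `-N` and so vanishes
at some `l_s`. There, Cauchy–Schwarz and `(w_i - a)(w_i - b) ≤ 0`, where `[a, b]` is an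
interval of length `l_s N` containing every `w_i` when `ω` lies in a cube of side `N`, give
`l_s C(l_s) ≥ 1`.
By the intermediate value theorem some `l ≤ l_s` has `l C(l) = 1`, and the configuration at `l`
realizes `ω` itself. So the projected cube even lies in `S_ω`.
-/

lemma kuraF_apply (N : ℕ) (θ : Fin N → ℝ) (i : Fin N) :
    kuraF N θ i = cos (θ i) * ∑ j, sin (θ j) - sin (θ i) * ∑ j, cos (θ j) := by
  simp only [kuraF, sin_sub, sum_sub_distrib, ← sum_mul]
  ring

lemma kappa_eq (N : ℕ) (θ : Fin N → ℝ) (i : Fin N) :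
    kappa N θ i = cos (θ i) * ∑ j, cos (θ j) + sin (θ i) * ∑ j, sin (θ j) := by
  simp only [kappa, cos_sub, sum_add_distrib, ← sum_mul]
  ring

lemma sqrt_one_sub_sq_pos {x : ℝ} (hx : |x| < 1) : 0 < √(1 - x ^ 2) :=
  Real.sqrt_pos.2 (by linarith [(sq_lt_one_iff_abs_lt_one x).2 hx])

lemma le_mul_of_sq_le_two_mul_sq_sub_sq {n T W a b : ℝ} (hab : a ≤ b) (hT : 0 ≤ T)
    (hn : n ^ 2 ≤ 2 * T ^ 2 - W ^ 2) (hW : T * (1 + 2 * a * b) ≤ (a + b) * W) :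
    n ≤ (b - a) * T := by
  suffices (2 - (b - a) ^ 2) * T ^ 2 ≤ W ^ 2 from
    (le_abs_self n).trans (abs_le_of_sq_le_sq (by nlinarith) (by positivity))
  rcases le_or_gt 2 ((b - a) ^ 2) with h | h
  · nlinarith
  have h1 : 0 < 1 + 2 * a * b := by nlinarith [sq_nonneg (a + b)]
  -- `(1 + 2ab)² = (2 - (b - a)²)(a + b)² + (1 - a² - b²)²`
  have h2 : (2 - (b - a) ^ 2) * (a + b) ^ 2 * T ^ 2 ≤ (a + b) ^ 2 * W ^ 2 := by
    have hW' : 0 ≤ (a + b) * W - T * (1 + 2 * a * b) := by linarith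
    nlinarith [mul_nonneg (mul_nonneg hT h1.le) hW', sq_nonneg ((1 - a ^ 2 - b ^ 2) * T)]
  rcases eq_or_ne (a + b) 0 with h0 | h0
  · rw [h0, zero_mul] at hW
    have : T = 0 := le_antisymm (nonpos_of_mul_nonpos_left hW h1) hT
    simp [this, sq_nonneg]
  · exact le_of_mul_le_mul_left (by linarith) (by positivity : 0 < (a + b) ^ 2)

theorem card_le_mul_sum_of_sum_inv_eq {ι : Type*} [Fintype ι] {w φ : ι → ℝ} {a b : ℝ}
    (hab : a ≤ b) (hφ : ∀ i, 0 < φ i) (hcircle : ∀ i, w i ^ 2 + φ i ^ 2 = 1)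
    (hw : ∀ i, w i ∈ Set.Icc a b) (hsum : ∑ i, w i = 0)
    (hgap : ∑ i, 1 / φ i = 2 * ∑ i, φ i) :
    (Fintype.card ι : ℝ) ≤ (b - a) * ∑ i, φ i := by
  rcases isEmpty_or_nonempty ι with _ | _
  · simp
  set T := ∑ i, φ i
  set W := ∑ i, w i / φ i
  have hT : 0 < T := sum_pos (fun i _ => hφ i) univ_nonempty
  have hsq : ∑ i, w i ^ 2 / φ i = T := by
    have (i : ι) : w i ^ 2 / φ i = 1 / φ i - φ i := by
      field_simp [(hφ i).ne']; linarith [hcircle i]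
    simp only [this, sum_sub_distrib, hgap]; ring
  -- Cauchy–Schwarz for the weights `1 - γ w_i`, with the optimal `γ = W / T`
  have hcs : (Fintype.card ι : ℝ) ^ 2 ≤ 2 * T ^ 2 - W ^ 2 := by
    set γ := W / T
    have h := sq_sum_div_le_sum_sq_div univ (fun i => 1 - γ * w i) fun i _ => hφ i
    have hnum : ∑ i, (1 - γ * w i) = Fintype.card ι := by
      simp [sum_sub_distrib, ← mul_sum, hsum]
    have hden : ∑ i, (1 - γ * w i) ^ 2 / φ i = 2 * T - W ^ 2 / T := by
      have (i : ι) : (1 - γ * w i) ^ 2 / φ i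
          = 1 / φ i - 2 * γ * (w i / φ i) + γ ^ 2 * (w i ^ 2 / φ i) := by
        field_simp [(hφ i).ne']; ring
      simp only [this, sum_add_distrib, sum_sub_distrib, ← mul_sum, hgap, hsq, γ]
      field_simp; ring
    rw [hnum, hden, div_le_iff₀ hT] at h
    nlinarith [h, mul_div_cancel₀ (W ^ 2) hT.ne']
  have hrange : T * (1 + 2 * a * b) ≤ (a + b) * W := by
    have (i : ι) : w i ^ 2 / φ i ≤ (a + b) * (w i / φ i) - a * b * (1 / φ i) := by
      rw [← mul_div_assoc, mul_one_div, ← sub_div]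
      gcongr
      · exact (hφ i).le
      · nlinarith [(hw i).1, (hw i).2]
    have := sum_le_sum fun i (_ : i ∈ univ) => this i
    rw [hsq, sum_sub_distrib, ← mul_sum, ← mul_sum, hgap] at this
    linarith
  exact le_mul_of_sq_le_two_mul_sq_sub_sq hab hT.le hcs hrange

section SyncFamily

variable {ι : Type*} [Fintype ι]

/-- For the configuration `θ_i = -arcsin (w_i)`, `orderSum w = Σ_i cos θ_i`, and
`stabilityGap w ≤ 0` is the stability condition `Σ_i 1 / κ_i ≤ 2`. -/
noncomputable def orderSum (w : ι → ℝ) : ℝ := ∑ i, √(1 - w i ^ 2)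

noncomputable def stabilityGap (w : ι → ℝ) : ℝ :=
  ∑ i, 1 / √(1 - w i ^ 2) - 2 * orderSum w

@[simp]
lemma stabilityGap_zero : stabilityGap (0 : ι → ℝ) = -Fintype.card ι := by
  simp [stabilityGap, orderSum]
  ring

lemma card_le_mul_orderSum {w : ι → ℝ} {a b : ℝ} (hab : a ≤ b) (hw1 : ∀ i, |w i| < 1)
    (hw : ∀ i, w i ∈ Set.Icc a b) (hsum : ∑ i, w i = 0) (hgap : stabilityGap w = 0) :
    (Fintype.card ι : ℝ) ≤ (b - a) * orderSum w := by
  refine card_le_mul_sum_of_sum_inv_eq hab (fun i => sqrt_one_sub_sq_pos (hw1 i)) (fun i => ?_)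
    hw hsum (by unfold stabilityGap orderSum at hgap; linarith)
  rw [Real.sq_sqrt (by nlinarith [(sq_lt_one_iff_abs_lt_one _).2 (hw1 i)])]
  ring

lemma stabilityGap_le_stabilityGap {w w' : ι → ℝ} (hle : ∀ i, |w i| ≤ |w' i|)
    (hw' : ∀ i, |w' i| < 1) : stabilityGap w ≤ stabilityGap w' := by
  have hcos (i : ι) : √(1 - w' i ^ 2) ≤ √(1 - w i ^ 2) :=
    Real.sqrt_le_sqrt (by nlinarith [sq_le_sq.2 (hle i)])
  have hinv : ∑ i, 1 / √(1 - w i ^ 2) ≤ ∑ i, 1 / √(1 - w' i ^ 2) :=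
    sum_le_sum fun i _ => one_div_le_one_div_of_le (sqrt_one_sub_sq_pos (hw' i)) (hcos i)
  have hsum : orderSum w' ≤ orderSum w := sum_le_sum fun i _ => hcos i
  unfold stabilityGap
  linarith

lemma stabilityGap_pos {w : ι → ℝ} (i₀ : ι)
    (h : 2 * (Fintype.card ι : ℝ) < 1 / √(1 - w i₀ ^ 2)) : 0 < stabilityGap w := by
  have hinv : 2 * (Fintype.card ι : ℝ) < ∑ i, 1 / √(1 - w i ^ 2) :=
    h.trans_le <| single_le_sum (f := fun i => 1 / √(1 - w i ^ 2))
      (fun i _ => by positivity) (mem_univ i₀)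
  have hsum : orderSum w ≤ Fintype.card ι := by
    unfold orderSum
    simpa using sum_le_card_nsmul univ _ 1 fun i _ =>
      Real.sqrt_le_one.2 (by nlinarith [sq_nonneg (w i)])
  unfold stabilityGap
  linarith

lemma continuousOn_stabilityGap_smul (ω : ι → ℝ) {s : Set ℝ}
    (hs : ∀ l ∈ s, ∀ i, |l * ω i| < 1) :
    ContinuousOn (fun l : ℝ => stabilityGap (l • ω)) s := by
  simp only [stabilityGap, orderSum, Pi.smul_apply, smul_eq_mul]
  refine ContinuousOn.sub (continuousOn_finsetSum _ fun i _ => ?_) (by fun_prop)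
  exact continuousOn_const.div (by fun_prop) fun l hl => (sqrt_one_sub_sq_pos (hs l hl i)).ne'

lemma exists_stabilityGap_smul_eq_zero {ω : ι → ℝ} (hω : ω ≠ 0) :
    ∃ l, 0 ≤ l ∧ (∀ i, |l * ω i| < 1) ∧ stabilityGap (l • ω) = 0 := by
  obtain ⟨j, hj⟩ := Function.ne_iff.1 hω
  have : Nonempty ι := ⟨j⟩
  obtain ⟨i₀, hi₀⟩ := Finite.exists_max fun i => |ω i|
  have hm : 0 < |ω i₀| := (abs_pos.2 hj).trans_le (hi₀ j)
  set ε : ℝ := 1 / (2 * Fintype.card ι + 1)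
  have hε : 0 < ε := by positivity
  have hε1 : ε ≤ 1 :=
    div_le_one_of_le₀ (by linarith [(Fintype.card ι).cast_nonneg (α := ℝ)]) (by positivity)
  -- at `l₁` the smallest `cos θ_i` is `ε`, which makes the stability gap positive
  set l₁ := √(1 - ε ^ 2) / |ω i₀|
  have hl₁ : 0 ≤ l₁ := by positivity
  have hl₁ω : l₁ * |ω i₀| = √(1 - ε ^ 2) := div_mul_cancel₀ _ hm.ne'
  have hlt (l : ℝ) (hl : l ∈ Set.Icc 0 l₁) (i : ι) : |l * ω i| < 1 :=
    calc |l * ω i| = l * |ω i| := by rw [abs_mul, abs_of_nonneg hl.1]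
      _ ≤ l₁ * |ω i₀| := mul_le_mul hl.2 (hi₀ i) (abs_nonneg _) hl₁
      _ < 1 := by rw [hl₁ω, Real.sqrt_lt' one_pos]; nlinarith
  have hneg : stabilityGap ((0 : ℝ) • ω) ≤ 0 := by simp
  have hpos : 0 ≤ stabilityGap (l₁ • ω) := by
    refine (stabilityGap_pos i₀ ?_).le
    have : 1 - (l₁ • ω) i₀ ^ 2 = ε ^ 2 := by
      rw [Pi.smul_apply, smul_eq_mul, ← sq_abs, abs_mul, abs_of_nonneg hl₁, hl₁ω,
        Real.sq_sqrt (by nlinarith)]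
      ring
    rw [this, Real.sqrt_sq hε.le, one_div_one_div]
    linarith
  obtain ⟨l, hl, hgap⟩ := intermediate_value_Icc hl₁ (continuousOn_stabilityGap_smul ω hlt)
    ⟨hneg, hpos⟩
  exact ⟨l, hl.1, hlt l hl, hgap⟩

end SyncFamily

lemma smul_mem_stableFreqSet {N : ℕ} {w : Fin N → ℝ} (hsum : ∑ i, w i = 0)
    (hw : ∀ i, |w i| < 1) (hgap : stabilityGap w ≤ 0) : orderSum w • w ∈ stableFreqSet N := by
  set θ : Fin N → ℝ := fun i => -arcsin (w i)
  have hsin (i : Fin N) : sin (θ i) = -w i := by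
    obtain ⟨h₁, h₂⟩ := abs_lt.1 (hw i)
    simp only [θ, sin_neg, sin_arcsin h₁.le h₂.le]
  have hcos (i : Fin N) : cos (θ i) = √(1 - w i ^ 2) := by
    simp only [θ, cos_neg, cos_arcsin]
  have hsum_sin : ∑ j, sin (θ j) = 0 := by simp [hsin, hsum]
  have hsum_cos : ∑ j, cos (θ j) = orderSum w := by simp [hcos, orderSum]
  have hkappa (i : Fin N) : kappa N θ i = √(1 - w i ^ 2) * orderSum w := by
    rw [kappa_eq, hsum_sin, hsum_cos, hcos]; ring
  have hpos (i : Fin N) : 0 < √(1 - w i ^ 2) := sqrt_one_sub_sq_pos (hw i)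
  have horder (i : Fin N) : 0 < orderSum w :=
    (hpos i).trans_le (single_le_sum (fun j _ => (hpos j).le) (mem_univ i))
  refine ⟨θ, fun i => hkappa i ▸ mul_pos (hpos i) (horder i), ?_, ?_⟩
  · rcases isEmpty_or_nonempty (Fin N) with _ | ⟨⟨i⟩⟩
    · simp
    have : ∑ i, 1 / √(1 - w i ^ 2) ≤ 2 * orderSum w := by
      unfold stabilityGap at hgap; linarith
    calc ∑ i, 1 / kappa N θ i = (∑ i, 1 / √(1 - w i ^ 2)) / orderSum w := by
          simp only [hkappa, sum_div]; congr! 1; field_simp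
      _ ≤ 2 := by rw [div_le_iff₀ (horder i)]; exact this
  · ext i
    rw [kuraF_apply, hsum_sin, hsum_cos, hsin, Pi.smul_apply, smul_eq_mul]
    ring

theorem mem_stableFreqSet_of_mem_Icc {N : ℕ} {ω : Fin N → ℝ} {a : ℝ}
    (hsum : ∑ i, ω i = 0) (hω : ∀ i, ω i ∈ Set.Icc a (a + N)) : ω ∈ stableFreqSet N := by
  rcases eq_or_ne ω 0 with rfl | hω0
  · simpa using smul_mem_stableFreqSet (w := (0 : Fin N → ℝ)) (by simp) (by simp) (by simp)
  obtain ⟨ls, hls, hls1, hgap⟩ := exists_stabilityGap_smul_eq_zero hω0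
  have hN : (0 : ℝ) < N := by
    obtain ⟨i, -⟩ := Function.ne_iff.1 hω0
    exact_mod_cast i.pos
  have hkey : 1 ≤ ls * orderSum (ls • ω) := by
    have := card_le_mul_orderSum (w := ls • ω) (a := ls * a) (b := ls * (a + N))
      (by nlinarith) (by simpa using hls1)
      (fun i => ⟨mul_le_mul_of_nonneg_left (hω i).1 hls,
        mul_le_mul_of_nonneg_left (hω i).2 hls⟩)
      (by simp [← mul_sum, hsum]) hgap
    rw [Fintype.card_fin] at this
    nlinarith
  have hcont : ContinuousOn (fun l : ℝ => l * orderSum (l • ω)) (Set.Icc 0 ls) := by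
    unfold orderSum; fun_prop
  obtain ⟨l, hl, hl1 : l * orderSum (l • ω) = 1⟩ :=
    intermediate_value_Icc hls hcont ⟨by simp, hkey⟩
  have hle (i : Fin N) : |l * ω i| ≤ |ls * ω i| := by
    rw [abs_mul, abs_mul, abs_of_nonneg hl.1, abs_of_nonneg hls]
    exact mul_le_mul_of_nonneg_right hl.2 (abs_nonneg _)
  have hmem := smul_mem_stableFreqSet (w := l • ω) (by simp [← mul_sum, hsum])
    (fun i => (hle i).trans_lt (hls1 i)) ((stabilityGap_le_stabilityGap hle hls1).trans hgap.le)
  rwa [smul_smul, mul_comm, hl1, one_smul] at hmem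

lemma sum_meanZeroProj (N : ℕ) (x : Fin N → ℝ) : ∑ i, meanZeroProj N x i = 0 := by
  rcases Nat.eq_zero_or_pos N with rfl | hN
  · simp
  simp only [meanZeroProj, sum_sub_distrib, sum_const, card_univ, Fintype.card_fin, nsmul_eq_mul]
  field_simp
  ring

theorem stmt12_general (N : ℕ) :
    meanZeroProj N '' {x | ∀ i, x i ∈ Set.Icc (-(N : ℝ) / 2) ((N : ℝ) / 2)}
      ⊆ closure (stableFreqSet N) := by
  rintro _ ⟨x, hx, rfl⟩
  refine subset_closure <| mem_stableFreqSet_of_mem_Icc (a := -(N : ℝ) / 2 - (∑ j, x j) / N)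
    (sum_meanZeroProj N x) fun i => ?_
  constructor <;> simp only [meanZeroProj] <;> linarith [(hx i).1, (hx i).2]

/-- The projection onto the mean-zero hyperplane of the cube `[-N/2, N/2]^N` (the scaled
Voronoi cell of the root lattice `A_{N-1}`) is contained in the closure of the stable
frequency set. -/
theorem stmt12 (N : ℕ) (hN : 2 ≤ N) :
    meanZeroProj N '' {x | ∀ i, x i ∈ Set.Icc (-(N : ℝ) / 2) ((N : ℝ) / 2)}
      ⊆ closure (stableFreqSet N) :=
  stmt12_general N
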